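/- arXiv:1401.8027 — 4 statements merged into one kernel-verified Lean document; each statement's English description precedes it below -/
import Mathlib

section
/- Let q be a complex number with |q| < 1. Then ∏_{n=1}^∞ 1/((1−q^{6n−1})(1−q^{6n−5})) = ∏_{n=1}^∞ (1+q^n)/(1+q^{3n}). -/
/-!
Writing `(a; q)_∞ = ∏ (1 - a qⁿ)`, the identity `(1 + x)/(1 + x³) = (1 - x²)(1 - x³)/((1 - x)(1 - x⁶))`
turns the right-hand side into `(q²; q²)_∞ (q³; q³)_∞ / ((q; q)_∞ (q⁶; q⁶)_∞)`. Splitting every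
product over the residue classes of the exponent modulo 6 expresses everything through the six
products `(qʳ; q⁶)_∞`, `1 ≤ r ≤ 6`, and all of them cancel except `(q; q⁶)_∞ (q⁵; q⁶)_∞`.
-/

open Finset

theorem Multipliable.tprod_eq_prod_range_tprod_mul_add {α : Type*} [CommMonoid α]
    [TopologicalSpace α] [ContinuousMul α] [T3Space α] {f : ℕ → α} (hf : Multipliable f)
    (m : ℕ) [NeZero m] (hres : ∀ j < m, Multipliable fun n ↦ f (m * n + j)) :
    ∏' n, f n = ∏ j ∈ range m, ∏' n, f (m * n + j) := by
  let e : Fin m × ℕ ≃ ℕ := ((Nat.divModEquiv m).trans (Equiv.prodComm _ _)).symm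
  have he : ∀ p, e p = m * p.2 + p.1 := fun p ↦ by simp [e, mul_comm]
  have hfe : Multipliable fun p ↦ f (e p) := e.multipliable_iff.2 hf
  rw [← e.tprod_eq, hfe.tprod_prod' fun j ↦ by simpa only [he] using hres j j.2, tprod_fintype]
  simp only [he]
  exact Fin.prod_univ_eq_prod_range (fun j ↦ ∏' n, f (m * n + j)) m

lemma one_add_div_one_add_pow_three {K : Type*} [Field K] {x : K} (hx : x ^ 3 ≠ 1) :
    (1 + x) / (1 + x ^ 3) = (1 - x ^ 2) * (1 - x ^ 3) / ((1 - x) * (1 - x ^ 6)) := by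
  have h1 : 1 - x ≠ 0 := fun h ↦ hx (by rw [← sub_eq_zero.1 h, one_pow])
  have h3 : 1 - x ^ 3 ≠ 0 := sub_ne_zero.2 (Ne.symm hx)
  rw [show 1 - x ^ 2 = (1 - x) * (1 + x) by ring,
    show 1 - x ^ 6 = (1 - x ^ 3) * (1 + x ^ 3) by ring]
  field_simp

noncomputable def qPochhammer {K : Type*} [NormedField K] (a q : K) : K :=
  ∏' n : ℕ, (1 - a * q ^ n)

section qPochhammer

variable {K : Type*} [NormedField K] {a q : K}

lemma norm_pow_lt_one (hq : ‖q‖ < 1) {k : ℕ} (hk : k ≠ 0) : ‖q ^ k‖ < 1 := by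
  rw [norm_pow]
  exact pow_lt_one₀ (norm_nonneg q) hq hk

lemma summable_norm_mul_pow (a : K) (hq : ‖q‖ < 1) : Summable fun n : ℕ ↦ ‖a * q ^ n‖ := by
  simpa [norm_mul, norm_pow] using
    (summable_geometric_of_lt_one (norm_nonneg q) hq).mul_left ‖a‖

variable [CompleteSpace K]

lemma multipliable_one_sub_mul_pow (a : K) (hq : ‖q‖ < 1) :
    Multipliable fun n : ℕ ↦ 1 - a * q ^ n := by
  simpa [sub_eq_add_neg] using
    multipliable_one_add_of_summable (f := fun n : ℕ ↦ -(a * q ^ n))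
      (by simpa only [norm_neg] using summable_norm_mul_pow a hq)

lemma hasProd_qPochhammer (a : K) (hq : ‖q‖ < 1) :
    HasProd (fun n : ℕ ↦ 1 - a * q ^ n) (qPochhammer a q) :=
  (multipliable_one_sub_mul_pow a hq).hasProd

lemma qPochhammer_ne_zero (ha : ‖a‖ < 1) (hq : ‖q‖ < 1) : qPochhammer a q ≠ 0 := by
  have hfactor : ∀ n : ℕ, 1 + -(a * q ^ n) ≠ 0 := fun n h ↦ by
    have : ‖a * q ^ n‖ < 1 := by
      rw [norm_mul, norm_pow]
      exact mul_lt_one_of_nonneg_of_lt_one_left (norm_nonneg a) ha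
        (pow_le_one₀ (norm_nonneg q) hq.le)
    rw [show a * q ^ n = 1 by linear_combination -h, norm_one] at this
    exact this.false
  simpa [qPochhammer, sub_eq_add_neg] using tprod_one_add_ne_zero_of_summable hfactor
    (by simpa only [norm_neg] using summable_norm_mul_pow a hq)

lemma qPochhammer_pow_ne_zero (hq : ‖q‖ < 1) {r k : ℕ} (hr : r ≠ 0) (hk : k ≠ 0) :
    qPochhammer (q ^ r) (q ^ k) ≠ 0 :=
  qPochhammer_ne_zero (norm_pow_lt_one hq hr) (norm_pow_lt_one hq hk)

lemma qPochhammer_eq_prod_range (a : K) (hq : ‖q‖ < 1) (m : ℕ) [NeZero m] :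
    qPochhammer a q = ∏ j ∈ range m, qPochhammer (a * q ^ j) (q ^ m) := by
  have key : ∀ j n : ℕ, 1 - a * q ^ (m * n + j) = 1 - a * q ^ j * (q ^ m) ^ n := fun j n ↦ by
    ring
  rw [qPochhammer, (multipliable_one_sub_mul_pow a hq).tprod_eq_prod_range_tprod_mul_add m
    fun j _ ↦ by
      simpa only [key] using multipliable_one_sub_mul_pow (a * q ^ j) (norm_pow_lt_one hq
        (NeZero.ne m))]
  simp only [key, qPochhammer]

lemma tprod_one_div_one_sub_pow_six_sub_one_mul (hq : ‖q‖ < 1) :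
    ∏' n : ℕ, 1 / ((1 - q ^ (6 * (n + 1) - 1)) * (1 - q ^ (6 * (n + 1) - 5))) =
      1 / (qPochhammer (q ^ 5) (q ^ 6) * qPochhammer q (q ^ 6)) := by
  have hq6 := norm_pow_lt_one hq (k := 6) (by norm_num)
  refine (tprod_congr fun n ↦ ?_).trans (hasProd_one.div₀
    ((hasProd_qPochhammer _ hq6).mul (hasProd_qPochhammer _ hq6))
    (mul_ne_zero (qPochhammer_pow_ne_zero hq (by norm_num) (by norm_num))
      (qPochhammer_ne_zero hq hq6))).tprod_eq
  rw [show 6 * (n + 1) - 1 = 5 + 6 * n by omega, show 6 * (n + 1) - 5 = 1 + 6 * n by omega]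
  ring

lemma tprod_one_add_pow_div_one_add_pow_three (hq : ‖q‖ < 1) :
    ∏' n : ℕ, (1 + q ^ (n + 1)) / (1 + q ^ (3 * (n + 1))) =
      qPochhammer (q ^ 2) (q ^ 2) * qPochhammer (q ^ 3) (q ^ 3) /
        (qPochhammer q q * qPochhammer (q ^ 6) (q ^ 6)) := by
  have hqk : ∀ k ≠ 0, ‖q ^ k‖ < 1 := fun k hk ↦ norm_pow_lt_one hq hk
  refine (tprod_congr fun n ↦ ?_).trans (HasProd.div₀
    ((hasProd_qPochhammer _ (hqk 2 (by norm_num))).mul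
      (hasProd_qPochhammer _ (hqk 3 (by norm_num))))
    ((hasProd_qPochhammer _ hq).mul (hasProd_qPochhammer _ (hqk 6 (by norm_num))))
    (mul_ne_zero (qPochhammer_ne_zero hq hq)
      (qPochhammer_pow_ne_zero hq (by norm_num) (by norm_num)))).tprod_eq
  have hx : (q ^ (n + 1)) ^ 3 ≠ 1 := fun h ↦ by
    have := hqk (3 * (n + 1)) (by omega)
    rw [pow_mul', h, norm_one] at this
    exact this.false
  rw [pow_mul', one_add_div_one_add_pow_three hx]
  ring

end qPochhammer

/-- Schur's identity: for `|q| < 1`,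
`∏_{n≥1} 1/((1-q^{6n-1})(1-q^{6n-5})) = ∏_{n≥1} (1+q^n)/(1+q^{3n})`. -/
theorem stmt_4 (q : ℂ) (hq : ‖q‖ < 1) :
    (∏' n : ℕ, 1 / ((1 - q ^ (6 * (n + 1) - 1)) * (1 - q ^ (6 * (n + 1) - 5)))) =
      ∏' n : ℕ, (1 + q ^ (n + 1)) / (1 + q ^ (3 * (n + 1))) := by
  rw [tprod_one_div_one_sub_pow_six_sub_one_mul hq, tprod_one_add_pow_div_one_add_pow_three hq,
    qPochhammer_eq_prod_range _ hq 6,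
    qPochhammer_eq_prod_range _ (norm_pow_lt_one hq two_ne_zero) 3,
    qPochhammer_eq_prod_range _ (norm_pow_lt_one hq three_ne_zero) 2]
  simp only [prod_range_succ, prod_range_zero, ← pow_mul, ← pow_add, ← pow_succ']
  norm_num
  have h6 : ∀ r ≠ 0, qPochhammer (q ^ r) (q ^ 6) ≠ 0 := fun r hr ↦
    qPochhammer_pow_ne_zero hq hr (by norm_num)
  field_simp [h6, qPochhammer_ne_zero hq (norm_pow_lt_one hq (k := 6) (by norm_num))]
end

section
/- For every positive integer n, the number of partitions of n into parts congruent to ±1 modulo 6 equals the number of partitions of n into distinct parts congruent to ±1 modulo 3. (That is, the number of finite multisets of positive integers, each element congruent to 1 or 5 modulo 6, with sum n, equals the number of finite sets of positive integers, each element congruent to 1 or 2 modulo 3, with sum n.) -/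
/-!
Glaisher's bijection. Splitting each distinct part `2 ^ k * a` (`a` odd) into `2 ^ k` copies
of `a` turns a partition into distinct parts into one into odd parts; the inverse merges the
`c` copies of an odd part `a` into the parts `2 ^ k * a`, `k` running over the binary digits of
`c`. The odd part of `2 ^ k * a` is `a`, so any condition on odd parts is preserved, and
`3 ∣ 2 ^ k * a ↔ 3 ∣ a` matches distinct parts `≡ ±1 (mod 3)` with odd parts `≡ ±1 (mod 6)`.
-/

namespace Nat

theorem ordProj_pow_mul_of_not_dvd {m : ℕ} (k : ℕ) {p : ℕ} (hp : p.Prime) (hm : ¬p ∣ m) :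
    ordProj[p] (p ^ k * m) = p ^ k := by
  have hm0 : 0 < m := Nat.pos_of_ne_zero fun h => hm (h ▸ dvd_zero p)
  refine Nat.eq_of_mul_eq_mul_right hm0 ?_
  calc ordProj[p] (p ^ k * m) * m = ordProj[p] (p ^ k * m) * ordCompl[p] (p ^ k * m) := by
        rw [ordCompl_pow_mul_of_not_dvd k hp hm]
    _ = p ^ k * m := ordProj_mul_ordCompl_eq_self _ _

theorem dvd_ordCompl_iff_dvd {p q n : ℕ} (hpq : ¬p ∣ q) : q ∣ ordCompl[p] n ↔ q ∣ n :=
  ⟨fun h => h.trans (ordCompl_dvd n p), fun h => dvd_ordCompl_of_dvd_not_dvd h hpq⟩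

theorem odd_ordCompl_two_iff {n : ℕ} : Odd (ordCompl[2] n) ↔ n ≠ 0 := by
  refine ⟨fun h hn => by simp [hn] at h, fun hn => ?_⟩
  exact Nat.odd_iff.2 (Nat.two_dvd_ne_zero.1 (not_dvd_ordCompl Nat.prime_two hn))

end Nat

namespace Glaisher

def splitParts (S : Finset ℕ) : Multiset ℕ :=
  S.val.bind fun s => Multiset.replicate (ordProj[2] s) (ordCompl[2] s)

def mergeParts (μ : Multiset ℕ) : Finset ℕ :=
  μ.toFinset.biUnion fun a => (μ.count a).bitIndices.toFinset.image (2 ^ · * a)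

theorem sum_splitParts (S : Finset ℕ) : (splitParts S).sum = ∑ s ∈ S, s := by
  simp only [splitParts, Multiset.sum_bind, Multiset.sum_replicate, smul_eq_mul,
    Nat.ordProj_mul_ordCompl_eq_self]
  rfl

theorem mem_splitParts {S : Finset ℕ} {m : ℕ} :
    m ∈ splitParts S ↔ ∃ s ∈ S, ordCompl[2] s = m := by
  simp [splitParts, Multiset.mem_replicate, eq_comm]

theorem count_splitParts (S : Finset ℕ) (a : ℕ) :
    (splitParts S).count a = ∑ s ∈ S with ordCompl[2] s = a, ordProj[2] s := by
  simp only [splitParts, Multiset.count_bind, Multiset.count_replicate, Finset.sum_filter]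
  rfl

theorem mem_mergeParts {μ : Multiset ℕ} {t : ℕ} :
    t ∈ mergeParts μ ↔ ∃ a ∈ μ, ∃ k ∈ (μ.count a).bitIndices, 2 ^ k * a = t := by
  simp [mergeParts]

theorem filter_mergeParts {μ : Multiset ℕ} (hμ : ∀ a ∈ μ, Odd a) (b : ℕ) :
    {t ∈ mergeParts μ | ordCompl[2] t = b} =
      (μ.count b).bitIndices.toFinset.image (2 ^ · * b) := by
  ext t
  simp only [Finset.mem_filter, mem_mergeParts, Finset.mem_image, List.mem_toFinset]
  constructor
  · rintro ⟨⟨a, ha, k, hk, rfl⟩, rfl⟩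
    rw [Nat.ordCompl_pow_mul_of_not_dvd k Nat.prime_two (hμ a ha).not_two_dvd_nat]
    exact ⟨k, hk, rfl⟩
  · rintro ⟨k, hk, rfl⟩
    have hb : b ∈ μ := Multiset.count_ne_zero.1 fun h => by simp [h] at hk
    exact ⟨⟨b, hb, k, hk, rfl⟩,
      Nat.ordCompl_pow_mul_of_not_dvd k Nat.prime_two (hμ b hb).not_two_dvd_nat⟩

theorem splitParts_mergeParts {μ : Multiset ℕ} (hμ : ∀ a ∈ μ, Odd a) :
    splitParts (mergeParts μ) = μ := by
  ext b
  rw [count_splitParts, filter_mergeParts hμ]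
  by_cases hb : b ∈ μ
  · have hb_odd := hμ b hb
    rw [Finset.sum_image fun k _ j _ h =>
      Nat.pow_right_injective le_rfl (Nat.eq_of_mul_eq_mul_right hb_odd.pos h)]
    simp [Nat.ordProj_pow_mul_of_not_dvd _ Nat.prime_two hb_odd.not_two_dvd_nat]
  · simp [Multiset.count_eq_zero.2 hb]

theorem toFinset_bitIndices_count_splitParts (S : Finset ℕ) (a : ℕ) :
    ((splitParts S).count a).bitIndices.toFinset =
      {s ∈ S | ordCompl[2] s = a}.image (·.factorization 2) := by
  rw [count_splitParts, ← Finset.sum_image, Finset.toFinset_bitIndices_sum_two_pow]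
  intro s hs t ht hst
  rw [Finset.mem_coe, Finset.mem_filter] at hs ht
  rw [← Nat.ordProj_mul_ordCompl_eq_self s 2, ← Nat.ordProj_mul_ordCompl_eq_self t 2, hs.2, ht.2,
    show s.factorization 2 = t.factorization 2 from hst]

theorem mergeParts_splitParts (S : Finset ℕ) : mergeParts (splitParts S) = S := by
  ext t
  simp only [mergeParts, Finset.mem_biUnion, Multiset.mem_toFinset,
    toFinset_bitIndices_count_splitParts, Finset.mem_image, Finset.mem_filter, mem_splitParts]
  constructor
  · rintro ⟨_, -, k, ⟨s, ⟨hs, rfl⟩, rfl⟩, rfl⟩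
    rwa [Nat.ordProj_mul_ordCompl_eq_self]
  · intro ht
    exact ⟨_, ⟨t, ht, rfl⟩, _, ⟨t, ⟨ht, rfl⟩, rfl⟩, Nat.ordProj_mul_ordCompl_eq_self t 2⟩

theorem sum_mergeParts {μ : Multiset ℕ} (hμ : ∀ a ∈ μ, Odd a) :
    ∑ t ∈ mergeParts μ, t = μ.sum := by
  rw [← sum_splitParts, splitParts_mergeParts hμ]

theorem ordCompl_mem_of_mem_mergeParts {μ : Multiset ℕ} (hμ : ∀ a ∈ μ, Odd a) {t : ℕ}
    (ht : t ∈ mergeParts μ) : ordCompl[2] t ∈ μ := by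
  obtain ⟨a, ha, k, -, rfl⟩ := mem_mergeParts.1 ht
  rwa [Nat.ordCompl_pow_mul_of_not_dvd k Nat.prime_two (hμ a ha).not_two_dvd_nat]

theorem card_odd_parts_eq_card_distinct_parts (P : ℕ → Prop) (n : ℕ) :
    Nat.card {μ : Multiset ℕ // (∀ a ∈ μ, Odd a ∧ P a) ∧ μ.sum = n} =
      Nat.card {S : Finset ℕ //
        (∀ s ∈ S, Odd (ordCompl[2] s) ∧ P (ordCompl[2] s)) ∧ ∑ s ∈ S, s = n} := by
  refine Nat.card_congr
    { toFun := fun μ => ⟨mergeParts μ.1, fun t ht => ?_, ?_⟩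
      invFun := fun S => ⟨splitParts S.1, fun m hm => ?_, ?_⟩
      left_inv := fun μ => Subtype.ext (splitParts_mergeParts fun a ha => (μ.2.1 a ha).1)
      right_inv := fun S => Subtype.ext (mergeParts_splitParts S.1) }
  · exact μ.2.1 _ (ordCompl_mem_of_mem_mergeParts (fun a ha => (μ.2.1 a ha).1) ht)
  · rw [sum_mergeParts fun a ha => (μ.2.1 a ha).1, μ.2.2]
  · obtain ⟨s, hs, rfl⟩ := mem_splitParts.1 hm
    exact S.2.1 s hs
  · rw [sum_splitParts, S.2.2]

end Glaisher

theorem stmt_5_general (n : ℕ) :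
    Nat.card {μ : Multiset ℕ | (∀ m ∈ μ, m % 6 = 1 ∨ m % 6 = 5) ∧ μ.sum = n} =
      Nat.card {S : Finset ℕ | (∀ m ∈ S, m % 3 = 1 ∨ m % 3 = 2) ∧ ∑ m ∈ S, m = n} := by
  have mod_six_iff (m : ℕ) : m % 6 = 1 ∨ m % 6 = 5 ↔ Odd m ∧ ¬3 ∣ m := by
    rw [Nat.odd_iff]; omega
  have mod_three_iff (s : ℕ) :
      s % 3 = 1 ∨ s % 3 = 2 ↔ Odd (ordCompl[2] s) ∧ ¬3 ∣ ordCompl[2] s := by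
    rw [Nat.odd_ordCompl_two_iff, Nat.dvd_ordCompl_iff_dvd (by norm_num)]; omega
  simp only [mod_six_iff, mod_three_iff]
  exact Glaisher.card_odd_parts_eq_card_distinct_parts (¬3 ∣ ·) n

/-- The number of partitions of `n` into parts `≡ ±1 (mod 6)` equals the number of
partitions of `n` into distinct parts `≡ ±1 (mod 3)`. -/
theorem stmt_5 (n : ℕ) (hn : 0 < n) :
    Nat.card {μ : Multiset ℕ | (∀ m ∈ μ, m % 6 = 1 ∨ m % 6 = 5) ∧ μ.sum = n} =
      Nat.card {S : Finset ℕ | (∀ m ∈ S, m % 3 = 1 ∨ m % 3 = 2) ∧ ∑ m ∈ S, m = n} :=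
  stmt_5_general n
end

section
/- Let q be a complex number with |q| < 1 and let l, r be integers with 0 < r < l. Then ∑_{n ∈ ℤ} q^{ln²−rn} = ∏_{n=1}^∞ (1−q^{2ln})(1−q^{4ln−2(l−r)})(1−q^{4l(n−1)+2(l−r)}) / ((1−q^{2ln−l−r})(1−q^{2l(n−1)+l+r})). -/
/-!
With `x = q^l` and `z = q^{-r}` the sum is `∑ₙ x^{n²} zⁿ`, and after cancelling
`1 - a² = (1 - a)(1 + a)` each factor of the product is
`(1 - x^{2n})(1 + x^{2n-1} z)(1 + x^{2n-1}/z)`, so the identity is the Jacobi triple product.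

The triple product is the limit of its finite form
`∏_{k<a} (1 + x^{2k+1} z) ∏_{k<b} (1 + x^{2k+1}/z) = ∑ⱼ [a+b, b+j]_{x²} x^{j²} zʲ`,
which follows from the two `q`-Pascal rules by induction on `a` and `b`. For `a = b = m → ∞` the
Gaussian binomial `[2m, m+j]_t = (t;t)_{2m} / ((t;t)_{m-j} (t;t)_{m+j})` tends to `1 / (t;t)_∞`
and stays bounded uniformly in `m` and `j`, so Tannery's theorem passes to the limit termwise.
-/

open Finset Function

section QBinomial

variable {K : Type*} [Field K] {t : K}

def qFactorial (t : K) (n : ℕ) : K := ∏ i ∈ range n, (1 - t ^ (i + 1))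

/-- `qBinom t a b` is the Gaussian binomial `[a + b, a]_t`, and `0` when `a < 0` or `b < 0`. -/
def qBinom (t : K) (a b : ℤ) : K :=
  if 0 ≤ a ∧ 0 ≤ b then
    qFactorial t (a + b).toNat / (qFactorial t a.toNat * qFactorial t b.toNat)
  else 0

@[simp]
lemma qFactorial_zero : qFactorial t 0 = 1 := by simp [qFactorial]

lemma qFactorial_succ (n : ℕ) : qFactorial t (n + 1) = qFactorial t n * (1 - t ^ (n + 1)) :=
  prod_range_succ _ _

lemma qFactorial_ne_zero (ht : ∀ n : ℕ, t ^ (n + 1) ≠ 1) (n : ℕ) : qFactorial t n ≠ 0 :=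
  prod_ne_zero_iff.2 fun i _ => sub_ne_zero.2 (ht i).symm

lemma qBinom_natCast (a b : ℕ) :
    qBinom t a b = qFactorial t (a + b) / (qFactorial t a * qFactorial t b) := by
  rw [qBinom, if_pos ⟨Nat.cast_nonneg a, Nat.cast_nonneg b⟩, ← Nat.cast_add]
  simp only [Int.toNat_natCast]

lemma qBinom_of_neg_left {a : ℤ} (ha : a < 0) (b : ℤ) : qBinom t a b = 0 := by
  simp [qBinom, ha.not_ge]

lemma qBinom_of_neg_right (a : ℤ) {b : ℤ} (hb : b < 0) : qBinom t a b = 0 := by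
  simp [qBinom, hb.not_ge]

lemma qBinom_comm (a b : ℤ) : qBinom t a b = qBinom t b a := by
  simp only [qBinom, and_comm, add_comm, mul_comm]

lemma qBinom_zero_left (ht : ∀ n : ℕ, t ^ (n + 1) ≠ 1) {b : ℤ} (hb : 0 ≤ b) :
    qBinom t 0 b = 1 := by
  lift b to ℕ using hb
  rw [← Nat.cast_zero, qBinom_natCast, zero_add, qFactorial_zero, one_mul,
    div_self (qFactorial_ne_zero ht b)]

lemma qBinom_add_one_add_one (ht : ∀ n : ℕ, t ^ (n + 1) ≠ 1) {a b : ℤ}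
    (hab : 0 ≤ a + b + 1) :
    qBinom t (a + 1) (b + 1) = qBinom t a (b + 1) + t ^ (a + 1) * qBinom t (a + 1) b := by
  rcases lt_trichotomy a (-1) with ha | rfl | ha
  · simp [qBinom_of_neg_left (show a + 1 < 0 by omega), qBinom_of_neg_left (show a < 0 by omega)]
  · simp [qBinom_of_neg_left (show (-1 : ℤ) < 0 by omega),
      qBinom_zero_left ht (show 0 ≤ b by omega), qBinom_zero_left ht (show 0 ≤ b + 1 by omega)]
  rcases lt_trichotomy b (-1) with hb | rfl | hb
  · simp [qBinom_of_neg_right _ (show b + 1 < 0 by omega),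
      qBinom_of_neg_right _ (show b < 0 by omega)]
  · rw [qBinom_comm, qBinom_comm a]
    simp [qBinom_of_neg_right _ (show (-1 : ℤ) < 0 by omega),
      qBinom_zero_left ht (show 0 ≤ a by omega), qBinom_zero_left ht (show 0 ≤ a + 1 by omega)]
  lift a to ℕ using (by omega)
  lift b to ℕ using (by omega)
  have := qFactorial_ne_zero ht
  have h1 := sub_ne_zero.2 (ht a).symm
  have h2 := sub_ne_zero.2 (ht b).symm
  rw [← Nat.cast_succ, ← Nat.cast_succ, zpow_natCast, qBinom_natCast, qBinom_natCast,
    qBinom_natCast, show a + 1 + (b + 1) = a + b + 1 + 1 by ring,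
    show a + (b + 1) = a + b + 1 by ring, show a + 1 + b = a + b + 1 by ring]
  simp only [qFactorial_succ]
  field_simp
  ring

lemma qBinom_add_one_add_one' (ht : ∀ n : ℕ, t ^ (n + 1) ≠ 1) {a b : ℤ}
    (hab : 0 ≤ a + b + 1) :
    qBinom t (a + 1) (b + 1) = t ^ (b + 1) * qBinom t a (b + 1) + qBinom t (a + 1) b := by
  rw [qBinom_comm, qBinom_add_one_add_one ht (by omega), qBinom_comm, qBinom_comm (b + 1), add_comm]

lemma hasFiniteSupport_qBinom_sub_add (a b : ℤ) :
    HasFiniteSupport fun j => qBinom t (a - j) (b + j) := by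
  refine (Set.finite_Icc (-b) a).subset fun j hj => ?_
  by_contra hj'
  rcases (show a < j ∨ b + j < 0 by simp only [Set.mem_Icc] at hj'; omega) with h | h
  · exact hj (qBinom_of_neg_left (by omega) _)
  · exact hj (qBinom_of_neg_right _ h)

lemma qBinom_add_one_sub (ht : ∀ n : ℕ, t ^ (n + 1) ≠ 1) {a b : ℤ} (hab : 0 ≤ a + b)
    (j : ℤ) :
    qBinom t (a + 1 - j) (b + j) =
      qBinom t (a - j) (b + j) + t ^ (a - j + 1) * qBinom t (a - (j - 1)) (b + (j - 1)) := by
  have := qBinom_add_one_add_one ht (a := a - j) (b := b + (j - 1)) (by omega)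
  rw [show b + (j - 1) + 1 = b + j by ring] at this
  rwa [show a + 1 - j = a - j + 1 by ring, show a - (j - 1) = a - j + 1 by ring]

lemma qBinom_sub_add_one_add (ht : ∀ n : ℕ, t ^ (n + 1) ≠ 1) {a b : ℤ} (hab : 0 ≤ a + b)
    (j : ℤ) :
    qBinom t (a - j) (b + 1 + j) =
      qBinom t (a - j) (b + j) + t ^ (b + j + 1) * qBinom t (a - (j + 1)) (b + (j + 1)) := by
  have := qBinom_add_one_add_one' ht (a := a - (j + 1)) (b := b + j) (by omega)
  rw [show a - (j + 1) + 1 = a - j by ring, add_comm (t ^ (b + j + 1) * _)] at this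
  rwa [show b + 1 + j = b + j + 1 by ring, show b + (j + 1) = b + j + 1 by ring]

end QBinomial

section FiniteTripleProduct

variable {K : Type*} [Field K] {x z : K}

lemma finsum_mul_one_add_shift {f : ℤ → K} (hf : HasFiniteSupport f) (y : K) (s : ℤ) :
    (∑ᶠ j, f j) * (1 + y) = ∑ᶠ j, (f j + y * f (j - s)) := by
  have hg : HasFiniteSupport fun j => y * f (j - s) :=
    (hf.comp_of_injective (sub_left_injective (b := s))).mul_right (fun _ => y)
  rw [finsum_add_distrib hf hg, mul_one_add, mul_comm, mul_finsum]
  congr 1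
  exact (finsum_comp_equiv (Equiv.subRight s) (f := fun j => y * f j)).symm

lemma pow_mul_mul_zpow_sub_one (hx : x ≠ 0) (hz : z ≠ 0) (a : ℕ) (j : ℤ) :
    x ^ (2 * a + 1) * z * (x ^ ((j - 1) ^ 2) * z ^ (j - 1)) =
      (x ^ 2) ^ (a - j + 1) * (x ^ (j ^ 2) * z ^ j) := by
  rw [← zpow_natCast, ← zpow_natCast x 2, ← zpow_mul, mul_mul_mul_comm, ← zpow_add₀ hx,
    ← zpow_one_add₀ hz, ← mul_assoc, ← zpow_add₀ hx]
  congr 2 <;> push_cast <;> ring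

lemma pow_mul_inv_mul_zpow_add_one (hx : x ≠ 0) (hz : z ≠ 0) (b : ℕ) (j : ℤ) :
    x ^ (2 * b + 1) * z⁻¹ * (x ^ ((j + 1) ^ 2) * z ^ (j + 1)) =
      (x ^ 2) ^ (b + j + 1) * (x ^ (j ^ 2) * z ^ j) := by
  rw [← zpow_natCast, ← zpow_natCast x 2, ← zpow_mul, mul_mul_mul_comm, ← zpow_add₀ hx,
    ← zpow_neg_one, ← zpow_add₀ hz, ← mul_assoc, ← zpow_add₀ hx]
  congr 2 <;> push_cast <;> ring

theorem prod_one_add_mul_prod_one_add_inv_eq_finsum (hx : x ≠ 0) (hz : z ≠ 0)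
    (ht : ∀ n : ℕ, (x ^ 2) ^ (n + 1) ≠ 1) (a b : ℕ) :
    (∏ k ∈ range a, (1 + x ^ (2 * k + 1) * z)) *
        ∏ k ∈ range b, (1 + x ^ (2 * k + 1) * z⁻¹) =
      ∑ᶠ j : ℤ, qBinom (x ^ 2) (a - j) (b + j) * (x ^ (j ^ 2) * z ^ j) := by
  have hfin (a b : ℤ) :
      HasFiniteSupport fun j => qBinom (x ^ 2) (a - j) (b + j) * (x ^ (j ^ 2) * z ^ j) :=
    (hasFiniteSupport_qBinom_sub_add a b).mul_left _
  induction a with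
  | zero =>
    induction b with
    | zero =>
      rw [finsum_eq_single _ 0 fun j hj => ?_]
      · simp [qBinom_zero_left ht le_rfl]
      · rcases hj.lt_or_gt with h | h
        · rw [qBinom_of_neg_right _ (by simpa using h), zero_mul]
        · rw [qBinom_of_neg_left (by simpa using h), zero_mul]
    | succ b ih =>
      rw [prod_range_succ, ← mul_assoc, ih, finsum_mul_one_add_shift (hfin _ _) _ (-1)]
      refine finsum_congr fun j => ?_
      rw [sub_neg_eq_add, mul_left_comm (x ^ (2 * b + 1) * z⁻¹),
        pow_mul_inv_mul_zpow_add_one hx hz, Nat.cast_succ,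
        qBinom_sub_add_one_add ht (by positivity)]
      ring
  | succ a ih =>
    rw [prod_range_succ, mul_right_comm, ih, finsum_mul_one_add_shift (hfin _ _) _ 1]
    refine finsum_congr fun j => ?_
    rw [mul_left_comm (x ^ (2 * a + 1) * z), pow_mul_mul_zpow_sub_one hx hz, Nat.cast_succ,
      qBinom_add_one_sub ht (by positivity)]
    ring

end FiniteTripleProduct

section Analytic

open Filter Topology

variable {𝕜 : Type*} [NormedField 𝕜] {t x z : 𝕜}

lemma pow_ne_one_of_norm_lt_one (ht : ‖t‖ < 1) {n : ℕ} (hn : n ≠ 0) : t ^ n ≠ 1 := by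
  intro h
  have := congrArg norm h
  rw [norm_pow, norm_one] at this
  exact (pow_lt_one₀ (norm_nonneg t) ht hn).ne this

lemma summable_norm_neg_pow_succ (ht : ‖t‖ < 1) : Summable fun i : ℕ => ‖-t ^ (i + 1)‖ := by
  simpa [norm_pow, pow_succ] using
    (summable_geometric_of_lt_one (norm_nonneg t) ht).mul_right ‖t‖

lemma summable_pow_sq_mul_pow {ρ : ℝ} (hρ0 : 0 ≤ ρ) (hρ : ρ < 1) (s : ℝ) :
    Summable fun n : ℕ => ρ ^ (n ^ 2) * s ^ n := by
  have h : Tendsto (fun n : ℕ => ρ ^ n * s) atTop (𝓝 0) := by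
    simpa using (tendsto_pow_atTop_nhds_zero_of_lt_one hρ0 hρ).mul_const s
  refine summable_geometric_two.of_norm_bounded_eventually_nat ?_
  filter_upwards [h.norm.eventually (ge_mem_nhds (by norm_num : ‖(0 : ℝ)‖ < 1 / 2))] with n hn
  calc ‖ρ ^ (n ^ 2) * s ^ n‖ = ‖ρ ^ n * s‖ ^ n := by
        rw [sq, pow_mul, ← mul_pow, norm_pow]
    _ ≤ (1 / 2) ^ n := pow_le_pow_left₀ (norm_nonneg _) hn n

lemma summable_norm_zpow_sq_mul_zpow (hx : ‖x‖ < 1) (z : 𝕜) :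
    Summable fun n : ℤ => ‖x ^ (n ^ 2) * z ^ n‖ := by
  refine .of_nat_of_neg ?_ ?_
  · refine (summable_pow_sq_mul_pow (norm_nonneg x) hx ‖z‖).congr fun n => ?_
    rw [norm_mul, norm_zpow, norm_zpow, ← Nat.cast_pow, zpow_natCast, zpow_natCast]
  · refine (summable_pow_sq_mul_pow (norm_nonneg x) hx ‖z‖⁻¹).congr fun n => ?_
    rw [norm_mul, norm_zpow, norm_zpow, neg_sq, ← Nat.cast_pow, zpow_natCast, zpow_neg,
      zpow_natCast, inv_pow]

lemma summable_norm_pow_two_mul_add_one_mul (hx : ‖x‖ < 1) (c : 𝕜) :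
    Summable fun k : ℕ => ‖x ^ (2 * k + 1) * c‖ := by
  have := (summable_geometric_of_lt_one (r := ‖x‖ ^ 2) (by positivity)
    (pow_lt_one₀ (norm_nonneg x) hx two_ne_zero)).mul_left (‖x‖ * ‖c‖)
  refine this.congr fun k => ?_
  rw [norm_mul, norm_pow]
  ring

variable [CompleteSpace 𝕜]

lemma multipliable_one_sub_pow_succ (ht : ‖t‖ < 1) :
    Multipliable fun i : ℕ => 1 - t ^ (i + 1) := by
  simpa [sub_eq_add_neg] using multipliable_one_add_of_summable (f := fun i => -t ^ (i + 1))
    (summable_norm_neg_pow_succ ht)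

lemma tprod_one_sub_pow_succ_ne_zero (ht : ‖t‖ < 1) :
    ∏' i : ℕ, (1 - t ^ (i + 1)) ≠ 0 := by
  simpa [sub_eq_add_neg] using tprod_one_add_ne_zero_of_summable (f := fun i => -t ^ (i + 1))
    (fun i => by simpa [← sub_eq_add_neg, sub_eq_zero] using
      (pow_ne_one_of_norm_lt_one ht i.succ_ne_zero).symm) (summable_norm_neg_pow_succ ht)

lemma tendsto_qFactorial (ht : ‖t‖ < 1) :
    Tendsto (qFactorial t) atTop (𝓝 (∏' i : ℕ, (1 - t ^ (i + 1)))) :=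
  (multipliable_one_sub_pow_succ ht).hasProd.tendsto_prod_nat

lemma exists_norm_qBinom_le (ht : ‖t‖ < 1) : ∃ C, ∀ a b : ℤ, ‖qBinom t a b‖ ≤ C := by
  have hP := tprod_one_sub_pow_succ_ne_zero ht
  obtain ⟨C₁, hC₁⟩ :=
    (Metric.isBounded_range_of_tendsto _ (tendsto_qFactorial ht)).exists_norm_le
  obtain ⟨C₂, hC₂⟩ :=
    (Metric.isBounded_range_of_tendsto _ ((tendsto_qFactorial ht).inv₀ hP)).exists_norm_le
  have h₁ (n : ℕ) : ‖qFactorial t n‖ ≤ C₁ := hC₁ _ ⟨n, rfl⟩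
  have h₂ (n : ℕ) : ‖(qFactorial t n)⁻¹‖ ≤ C₂ := hC₂ _ ⟨n, rfl⟩
  have hC₁0 : 0 ≤ C₁ := (norm_nonneg _).trans (h₁ 0)
  have hC₂0 : 0 ≤ C₂ := (norm_nonneg _).trans (h₂ 0)
  refine ⟨C₁ * C₂ * C₂, fun a b => ?_⟩
  unfold qBinom
  split_ifs
  · rw [div_eq_mul_inv, mul_inv, ← mul_assoc, norm_mul, norm_mul]
    exact mul_le_mul (mul_le_mul (h₁ _) (h₂ _) (norm_nonneg _) hC₁0) (h₂ _) (norm_nonneg _)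
      (mul_nonneg hC₁0 hC₂0)
  · rw [norm_zero]
    exact mul_nonneg (mul_nonneg hC₁0 hC₂0) hC₂0

lemma tendsto_qBinom (ht : ‖t‖ < 1) :
    Tendsto (fun p : ℤ × ℤ => qBinom t p.1 p.2) atTop
      (𝓝 (∏' i : ℕ, (1 - t ^ (i + 1)))⁻¹) := by
  set P := ∏' i : ℕ, (1 - t ^ (i + 1))
  have hP : P ≠ 0 := tprod_one_sub_pow_succ_ne_zero ht
  have hF : Tendsto (fun a : ℤ => qFactorial t a.toNat) atTop (𝓝 P) :=
    (tendsto_qFactorial ht).comp (tendsto_atTop_atTop.2 fun n => ⟨n, fun a ha => by omega⟩)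
  have h₁ : Tendsto (fun p : ℤ × ℤ => p.1) atTop atTop :=
    tendsto_fst.mono_left (by rw [prod_atTop_atTop_eq])
  have h₂ : Tendsto (fun p : ℤ × ℤ => p.2) atTop atTop :=
    tendsto_snd.mono_left (by rw [prod_atTop_atTop_eq])
  have hlim := (hF.comp (h₁.atTop_add_atTop h₂)).div ((hF.comp h₁).mul (hF.comp h₂))
    (mul_ne_zero hP hP)
  rw [show P / (P * P) = P⁻¹ by field_simp] at hlim
  refine hlim.congr' ?_
  filter_upwards [eventually_ge_atTop (0, 0)] with p hp
  simp [qBinom, hp.1, hp.2]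

lemma tendsto_sub_add_atTop (j : ℤ) :
    Tendsto (fun m : ℕ => ((m : ℤ) - j, (m : ℤ) + j)) atTop atTop := by
  rw [← prod_atTop_atTop_eq]
  exact (tendsto_atTop_atTop.2 fun b => ⟨(b + j).toNat, fun m hm => by omega⟩).prodMk
    (tendsto_atTop_atTop.2 fun b => ⟨(b - j).toNat, fun m hm => by omega⟩)

theorem jacobi_triple_product (hx0 : x ≠ 0) (hx : ‖x‖ < 1) (hz : z ≠ 0) :
    ∑' n : ℤ, x ^ (n ^ 2) * z ^ n =
      ∏' n : ℕ, (1 - x ^ (2 * n + 2)) * (1 + x ^ (2 * n + 1) * z) *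
        (1 + x ^ (2 * n + 1) * z⁻¹) := by
  have ht : ‖x ^ 2‖ < 1 := by simpa using pow_lt_one₀ (norm_nonneg x) hx two_ne_zero
  have hpartial (m : ℕ) :
      ∏ k ∈ range m, ((1 + x ^ (2 * k + 1) * z) * (1 + x ^ (2 * k + 1) * z⁻¹)) =
        ∑' j : ℤ, qBinom (x ^ 2) (m - j) (m + j) * (x ^ (j ^ 2) * z ^ j) := by
    have hfin : HasFiniteSupport fun j : ℤ =>
        qBinom (x ^ 2) (m - j) (m + j) * (x ^ (j ^ 2) * z ^ j) :=
      (hasFiniteSupport_qBinom_sub_add _ _).mul_left _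
    rw [prod_mul_distrib, tsum_eq_finsum hfin, prod_one_add_mul_prod_one_add_inv_eq_finsum hx0 hz
      fun n => pow_ne_one_of_norm_lt_one ht n.succ_ne_zero]
  obtain ⟨C, hC⟩ := exists_norm_qBinom_le ht
  have hsum : Tendsto
      (fun m : ℕ => ∑' j : ℤ, qBinom (x ^ 2) (m - j) (m + j) * (x ^ (j ^ 2) * z ^ j)) atTop
      (𝓝 (∑' j : ℤ, (∏' i : ℕ, (1 - (x ^ 2) ^ (i + 1)))⁻¹ * (x ^ (j ^ 2) * z ^ j))) :=
    tendsto_tsum_of_dominated_convergence ((summable_norm_zpow_sq_mul_zpow hx z).mul_left C)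
      (fun j => ((tendsto_qBinom ht).comp (tendsto_sub_add_atTop j)).mul_const _)
      (.of_forall fun m j => by
        rw [norm_mul]
        exact mul_le_mul_of_nonneg_right (hC _ _) (norm_nonneg _))
  have hmult :
      Multipliable fun k : ℕ => (1 + x ^ (2 * k + 1) * z) * (1 + x ^ (2 * k + 1) * z⁻¹) :=
    (multipliable_one_add_of_summable (summable_norm_pow_two_mul_add_one_mul hx z)).mul
      (multipliable_one_add_of_summable (summable_norm_pow_two_mul_add_one_mul hx z⁻¹))
  have hlim := tendsto_nhds_unique hmult.hasProd.tendsto_prod_nat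
    (hsum.congr fun m => (hpartial m).symm)
  rw [tsum_mul_left, eq_inv_mul_iff_mul_eq₀ (tprod_one_sub_pow_succ_ne_zero ht)] at hlim
  rw [← hlim, ← (multipliable_one_sub_pow_succ ht).tprod_mul hmult]
  refine tprod_congr fun n => ?_
  rw [← pow_mul, mul_add_one, mul_assoc]

end Analytic

section Specialization

variable {𝕜 : Type*} [NormedField 𝕜] {q : 𝕜} {l r : ℕ}

lemma quintuple_factor_eq_triple_factor (hq : ‖q‖ < 1) (hrl : r < l) (n : ℕ) :
    (1 - q ^ (2 * l * (n + 1))) * (1 - q ^ (4 * l * (n + 1) - 2 * (l - r))) *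
        (1 - q ^ (4 * l * n + 2 * (l - r))) /
      ((1 - q ^ (2 * l * (n + 1) - (l + r))) * (1 - q ^ (2 * l * n + (l + r)))) =
    (1 - q ^ (2 * l * (n + 1))) * (1 + q ^ (l * (2 * n + 1) - r)) *
      (1 + q ^ (l * (2 * n + 1) + r)) := by
  have hl : l * (2 * n + 1) = 2 * (l * n) + l := by ring
  have e₁ : 4 * l * (n + 1) - 2 * (l - r) = 2 * (l * (2 * n + 1) + r) := by
    rw [show 4 * l * (n + 1) = 4 * (l * n) + 4 * l by ring]; omega
  have e₂ : 4 * l * n + 2 * (l - r) = 2 * (l * (2 * n + 1) - r) := by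
    rw [show 4 * l * n = 4 * (l * n) by ring]; omega
  have e₃ : 2 * l * (n + 1) - (l + r) = l * (2 * n + 1) - r := by
    rw [show 2 * l * (n + 1) = 2 * (l * n) + 2 * l by ring]; omega
  have e₄ : 2 * l * n + (l + r) = l * (2 * n + 1) + r := by
    rw [show 2 * l * n = 2 * (l * n) by ring]; omega
  have hu := sub_ne_zero.2 (pow_ne_one_of_norm_lt_one hq (n := l * (2 * n + 1) - r) (by omega)).symm
  have hv := sub_ne_zero.2 (pow_ne_one_of_norm_lt_one hq (n := l * (2 * n + 1) + r) (by omega)).symm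
  rw [e₁, e₂, e₃, e₄, pow_mul', pow_mul']
  field_simp
  ring

lemma mul_sq_sub_mul_ne_zero (hrl : r < l) {n : ℤ} (hn : n ≠ 0) :
    (l : ℤ) * n ^ 2 - r * n ≠ 0 := by
  rw [sq, ← mul_assoc, ← sub_mul]
  refine mul_ne_zero ?_ hn
  rcases hn.lt_or_gt with h | h <;> nlinarith

end Specialization

theorem stmt_7_general (q : ℂ) (hq : ‖q‖ < 1) (l r : ℕ) (hrl : r < l) :
    (∑' n : ℤ, q ^ ((l : ℤ) * n ^ 2 - (r : ℤ) * n)) =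
      ∏' n : ℕ,
        ((1 - q ^ (2 * l * (n + 1))) * (1 - q ^ (4 * l * (n + 1) - 2 * (l - r))) *
            (1 - q ^ (4 * l * n + 2 * (l - r)))) /
          ((1 - q ^ (2 * l * (n + 1) - (l + r))) * (1 - q ^ (2 * l * n + (l + r)))) := by
  rw [tprod_congr (quintuple_factor_eq_triple_factor hq hrl)]
  rcases eq_or_ne q 0 with rfl | hq0
  -- at `q = 0` all exponents other than the `n = 0` one on the left are nonzero: both sides are `1`
  · rw [tsum_eq_single 0 fun n hn => zero_zpow _ (mul_sq_sub_mul_ne_zero hrl hn)]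
    have hexp (n : ℕ) : l * (2 * n + 1) - r ≠ 0 := by
      have := Nat.le_mul_of_pos_right l (show 0 < 2 * n + 1 by omega)
      omega
    simp [zero_pow, hexp, show l ≠ 0 by omega]
  · have hx0 : q ^ l ≠ 0 := pow_ne_zero l hq0
    have hz0 : q ^ r ≠ 0 := pow_ne_zero r hq0
    have hx : ‖q ^ l‖ < 1 := by rw [norm_pow]; exact pow_lt_one₀ (norm_nonneg q) hq (by omega)
    convert jacobi_triple_product hx0 hx (inv_ne_zero hz0) using 1
    · refine tsum_congr fun n => ?_
      rw [zpow_sub₀ hq0, zpow_mul, zpow_mul, zpow_natCast, zpow_natCast, div_eq_mul_inv, inv_zpow]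
    · refine tprod_congr fun n => ?_
      have hr' : r ≤ l * (2 * n + 1) := by nlinarith
      rw [inv_inv, ← pow_mul, ← pow_mul, pow_sub₀ q hq0 hr', pow_add]
      ring_nf

/-- Quintuple-product specialization: for `0 < r < l` and `|q| < 1`,
`∑_{n∈ℤ} q^{ln²-rn} = ∏_{n≥1} (1-q^{2ln})(1-q^{4ln-2(l-r)})(1-q^{4l(n-1)+2(l-r)})
  / ((1-q^{2ln-l-r})(1-q^{2l(n-1)+l+r}))`. -/
theorem stmt_7 (q : ℂ) (hq : ‖q‖ < 1) (l r : ℕ) (hr : 0 < r) (hrl : r < l) :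
    (∑' n : ℤ, q ^ ((l : ℤ) * n ^ 2 - (r : ℤ) * n)) =
      ∏' n : ℕ,
        ((1 - q ^ (2 * l * (n + 1))) * (1 - q ^ (4 * l * (n + 1) - 2 * (l - r))) *
            (1 - q ^ (4 * l * n + 2 * (l - r)))) /
          ((1 - q ^ (2 * l * (n + 1) - (l + r))) * (1 - q ^ (2 * l * n + (l + r)))) :=
  stmt_7_general q hq l r hrl
end

section
/- Let l ≥ 2, let {e_1,…,e_l} be the standard orthonormal basis of ℝ^l with inner product (·|·), and let Δ be the root system of type C_l consisting of the short roots ±(e_i−e_j)/√2 and ±(e_i+e_j)/√2 for 1 ≤ i < j ≤ l and the long roots ±√2·e_i for 1 ≤ i ≤ l. Let α_1 = (e_1−e_2)/√2, …, α_{l−1} = (e_{l−1}−e_l)/√2, α_l = √2·e_l be the simple roots; they form a basis of ℝ^l, and every root α has unique integer coordinates α = ∑_{i=1}^l k_i α_i. For k ∈ ℤ let ρ(k) ∈ {0,1} with ρ(k) ≡ k (mod 2), and define p(α) = ∑_{i=1}^{l−1} ρ(k_i) α_i and s(α) = ∑_{i=1}^{l−1} (k_i − ρ(k_i)) α_i.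 Suppose α and β are short roots such that α + β is a long root. Then (α|β) = 0, p(α) = p(β), and s(α+β) − s(α) − s(β) = 2·p(α). -/
open scoped BigOperators RealInnerProductSpace

/-- The standard orthonormal basis vector `e_i` of `ℝ^l`. -/
noncomputable def Ce (l : ℕ) (i : Fin l) : EuclideanSpace ℝ (Fin l) :=
  EuclideanSpace.single i 1

/-- The short roots `±(e_i - e_j)/√2`, `±(e_i + e_j)/√2` for `i < j`, of type `C_l`. -/
noncomputable def CshortRoots (l : ℕ) : Set (EuclideanSpace ℝ (Fin l)) :=
  {x | ∃ i j : Fin l, i < j ∧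
    (x = (Real.sqrt 2)⁻¹ • (Ce l i - Ce l j) ∨ x = -((Real.sqrt 2)⁻¹ • (Ce l i - Ce l j)) ∨
     x = (Real.sqrt 2)⁻¹ • (Ce l i + Ce l j) ∨ x = -((Real.sqrt 2)⁻¹ • (Ce l i + Ce l j)))}

/-- The long roots `±√2·e_i` of type `C_l`. -/
noncomputable def ClongRoots (l : ℕ) : Set (EuclideanSpace ℝ (Fin l)) :=
  {x | ∃ i : Fin l, x = Real.sqrt 2 • Ce l i ∨ x = -(Real.sqrt 2 • Ce l i)}

/-- The root system of type `C_l`. -/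
noncomputable def Croots (l : ℕ) : Set (EuclideanSpace ℝ (Fin l)) :=
  CshortRoots l ∪ ClongRoots l

/-- The simple roots: `α_i = (e_i - e_{i+1})/√2` for `i < l-1`, and `α_l = √2·e_l`. -/
noncomputable def Csimple (l : ℕ) (i : Fin l) : EuclideanSpace ℝ (Fin l) :=
  if h : (i : ℕ) + 1 < l then (Real.sqrt 2)⁻¹ • (Ce l i - Ce l ⟨(i : ℕ) + 1, h⟩)
  else Real.sqrt 2 • Ce l i

/-- `Ccoords l α k` says `k` is the coordinate vector of `α` in the simple root basis:
`α = ∑ k_i • α_i`. -/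
noncomputable def Ccoords (l : ℕ) (α : EuclideanSpace ℝ (Fin l)) (k : Fin l → ℤ) : Prop :=
  α = ∑ i : Fin l, (k i : ℝ) • Csimple l i

/-- `p(α) = ∑_{i=1}^{l-1} ρ(k_i)·α_i`, computed from the coordinate vector `k` of `α`;
here `ρ(k) = k % 2 ∈ {0,1}` with `ρ(k) ≡ k (mod 2)`. -/
noncomputable def Cp (l : ℕ) (k : Fin l → ℤ) : EuclideanSpace ℝ (Fin l) :=
  ∑ i : Fin l, (if (i : ℕ) + 1 < l then ((k i % 2 : ℤ) : ℝ) else 0) • Csimple l i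

/-- `s(α) = ∑_{i=1}^{l-1} (k_i - ρ(k_i))·α_i`, computed from the coordinate vector `k`. -/
noncomputable def Cs (l : ℕ) (k : Fin l → ℤ) : EuclideanSpace ℝ (Fin l) :=
  ∑ i : Fin l, (if (i : ℕ) + 1 < l then ((k i - k i % 2 : ℤ) : ℝ) else 0) • Csimple l i

/-!
The simple roots form a triangular system against the partial sums `x₀ + ⋯ + x_t`: the `t`-th
partial sum of `∑ kᵢ αᵢ` is `k_t / √2` (or `k_t √2` for the last index). So coordinates are unique
and additive, and for a long root `±√2 e_m`, whose partial sums are `0` or `±√2`, the first `l - 1`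
coordinates lie in `{0, ±2}`. Hence `α` and `β` have the same coordinates mod 2, which gives both
`p(α) = p(β)` and the identity for `s`. Orthogonality is `‖α + β‖² = 2 = ‖α‖² + ‖β‖²`.
-/

open Finset

noncomputable def Cweight (l : ℕ) (t : Fin l) : ℝ :=
  if (t : ℕ) + 1 < l then (Real.sqrt 2)⁻¹ else Real.sqrt 2

lemma Cweight_ne_zero (l : ℕ) (t : Fin l) : Cweight l t ≠ 0 := by
  unfold Cweight; split_ifs <;> positivity

noncomputable def partialSum (l : ℕ) (t : Fin l) : EuclideanSpace ℝ (Fin l) →ₗ[ℝ] ℝ :=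
  ∑ s ∈ Iic t, EuclideanSpace.projₗ s

lemma partialSum_apply (l : ℕ) (t : Fin l) (x : EuclideanSpace ℝ (Fin l)) :
    partialSum l t x = ∑ s ∈ Iic t, x s := by
  simp [partialSum]

lemma partialSum_Ce (l : ℕ) (t i : Fin l) : partialSum l t (Ce l i) = if i ≤ t then 1 else 0 := by
  simp [partialSum_apply, Ce, PiLp.single_apply]

-- `[i ≤ t] - [i + 1 ≤ t] = [i = t]`, and the last simple root has the maximal index.
lemma partialSum_Csimple (l : ℕ) (t i : Fin l) :
    partialSum l t (Csimple l i) = if i = t then Cweight l t else 0 := by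
  unfold Csimple Cweight
  split_ifs <;> simp only [map_smul, map_sub, partialSum_Ce, smul_eq_mul] <;>
    simp only [Fin.le_def, Fin.ext_iff] at * <;> split_ifs <;> first | omega | simp

lemma Ccoords.partialSum_eq {l : ℕ} {x : EuclideanSpace ℝ (Fin l)} {k : Fin l → ℤ}
    (h : Ccoords l x k) (t : Fin l) : partialSum l t x = k t * Cweight l t := by
  rw [h, map_sum, sum_eq_single t]
  · simp [partialSum_Csimple]
  · intro i _ hi
    simp [partialSum_Csimple, hi]
  · simp

lemma Ccoords.unique {l : ℕ} {x : EuclideanSpace ℝ (Fin l)} {k k' : Fin l → ℤ}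
    (h : Ccoords l x k) (h' : Ccoords l x k') : k = k' := by
  funext t
  have := (h.partialSum_eq t).symm.trans (h'.partialSum_eq t)
  exact_mod_cast mul_right_cancel₀ (Cweight_ne_zero l t) this

lemma Ccoords.add {l : ℕ} {x y : EuclideanSpace ℝ (Fin l)} {k k' : Fin l → ℤ}
    (h : Ccoords l x k) (h' : Ccoords l y k') : Ccoords l (x + y) (k + k') := by
  unfold Ccoords at *
  simp only [h, h', Pi.add_apply, Int.cast_add, add_smul, sum_add_distrib]

lemma norm_sq_Ce_add_Ce {l : ℕ} {i j : Fin l} (hij : i ≠ j) : ‖Ce l i + Ce l j‖ ^ 2 = 2 := by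
  simp [Ce, norm_add_sq_real, EuclideanSpace.inner_single_left, hij.symm]
  norm_num

lemma norm_sq_Ce_sub_Ce {l : ℕ} {i j : Fin l} (hij : i ≠ j) : ‖Ce l i - Ce l j‖ ^ 2 = 2 := by
  simp [Ce, norm_sub_sq_real, EuclideanSpace.inner_single_left, hij.symm]
  norm_num

lemma norm_sq_of_mem_CshortRoots {l : ℕ} {x : EuclideanSpace ℝ (Fin l)} (hx : x ∈ CshortRoots l) :
    ‖x‖ ^ 2 = 1 := by
  obtain ⟨i, j, hij, rfl | rfl | rfl | rfl⟩ := hx <;>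
    simp only [norm_neg, norm_smul, mul_pow, norm_inv, Real.norm_eq_abs,
      norm_sq_Ce_add_Ce hij.ne, norm_sq_Ce_sub_Ce hij.ne] <;> norm_num

lemma norm_sq_of_mem_ClongRoots {l : ℕ} {x : EuclideanSpace ℝ (Fin l)} (hx : x ∈ ClongRoots l) :
    ‖x‖ ^ 2 = 2 := by
  obtain ⟨i, rfl | rfl⟩ := hx <;> simp [Ce, norm_smul]

lemma two_dvd_coord_of_mem_ClongRoots {l : ℕ} {x : EuclideanSpace ℝ (Fin l)} {k : Fin l → ℤ}
    (hx : x ∈ ClongRoots l) (hk : Ccoords l x k) {t : Fin l} (ht : (t : ℕ) + 1 < l) :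
    2 ∣ k t := by
  have hkt : (k t : ℝ) = partialSum l t x * √2 := by
    rw [hk.partialSum_eq, Cweight, if_pos ht, mul_assoc, inv_mul_cancel₀ (by positivity), mul_one]
  obtain ⟨m, rfl | rfl⟩ := hx <;>
  · simp only [map_neg, map_smul, partialSum_Ce, smul_eq_mul] at hkt
    split_ifs at hkt <;> norm_num at hkt <;> norm_cast at hkt <;> omega

theorem stmt_15_general (l : ℕ) (α β : EuclideanSpace ℝ (Fin l))
    (hα : α ∈ CshortRoots l) (hβ : β ∈ CshortRoots l) (hαβ : α + β ∈ ClongRoots l)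
    (ka kb kc : Fin l → ℤ)
    (hka : Ccoords l α ka) (hkb : Ccoords l β kb) (hkc : Ccoords l (α + β) kc) :
    (inner ℝ α β : ℝ) = 0 ∧ Cp l ka = Cp l kb ∧
      Cs l kc - Cs l ka - Cs l kb = (2 : ℝ) • Cp l ka := by
  have hkc_eq : kc = ka + kb := hkc.unique (hka.add hkb)
  have heven (t : Fin l) (ht : (t : ℕ) + 1 < l) : 2 ∣ ka t + kb t := by
    simpa [hkc_eq] using two_dvd_coord_of_mem_ClongRoots hαβ hkc ht
  have hpar (t : Fin l) (ht : (t : ℕ) + 1 < l) : ka t % 2 = kb t % 2 := by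
    have := heven t ht
    omega
  refine ⟨?_, ?_, ?_⟩
  · have h := norm_add_sq_real α β
    rw [norm_sq_of_mem_ClongRoots hαβ, norm_sq_of_mem_CshortRoots hα,
      norm_sq_of_mem_CshortRoots hβ] at h
    linarith
  · refine sum_congr rfl fun i _ => ?_
    split_ifs with h
    · rw [hpar i h]
    · rfl
  · rw [Cs, Cs, Cs, Cp, smul_sum, ← sum_sub_distrib, ← sum_sub_distrib]
    refine sum_congr rfl fun i _ => ?_
    split_ifs with h
    · rw [← sub_smul, ← sub_smul, smul_smul]
      have hcoef : (ka i + kb i - (ka i + kb i) % 2) - (ka i - ka i % 2) - (kb i - kb i % 2)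
          = 2 * (ka i % 2) := by
        have := heven i h
        omega
      congr 1
      rw [hkc_eq, Pi.add_apply]
      exact_mod_cast hcoef
    · simp

/-- If `α`, `β` are short roots of `C_l` with `α + β` a long root, then `(α|β) = 0`,
`p(α) = p(β)` and `s(α+β) - s(α) - s(β) = 2·p(α)`. -/
theorem stmt_15 (l : ℕ) (hl : 2 ≤ l) (α β : EuclideanSpace ℝ (Fin l))
    (hα : α ∈ CshortRoots l) (hβ : β ∈ CshortRoots l) (hαβ : α + β ∈ ClongRoots l)
    (ka kb kc : Fin l → ℤ)
    (hka : Ccoords l α ka) (hkb : Ccoords l β kb) (hkc : Ccoords l (α + β) kc) :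
    (inner ℝ α β : ℝ) = 0 ∧ Cp l ka = Cp l kb ∧
      Cs l kc - Cs l ka - Cs l kb = (2 : ℝ) • Cp l ka :=
  stmt_15_general l α β hα hβ hαβ ka kb kc hka hkb hkc
end
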